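/- Error bound via directional alignment: let W ∈ ℝ^{d×d} be invertible with condition number κ(W) = σ_max(W)/σ_min(W), and let C_t, C_{t−1} ∈ ℝ^d be nonzero with cosine similarity s = ⟨C_t, C_{t−1}⟩/(‖C_t‖‖C_{t−1}‖). Then the distance between the normalized projected outputs satisfies ‖W·Ĉ_t/‖W·Ĉ_t‖ − W·Ĉ_{t−1}/‖W·Ĉ_{t−1}‖‖ ≤ 2·κ(W)·sqrt(2(1 − s)), where Ĉ denotes the unit normalization C/‖C‖. -/

import Mathlib

/-- Largest singular value: supremum of ‖Wx‖ over unit vectors x. -/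
noncomputable def sigmaMax {d : ℕ} (W : Matrix (Fin d) (Fin d) ℝ) : ℝ :=
  sSup ((fun x : EuclideanSpace ℝ (Fin d) => ‖Matrix.toEuclideanLin W x‖) '' {x | ‖x‖ = 1})

noncomputable def sigmaMin {d : ℕ} (W : Matrix (Fin d) (Fin d) ℝ) : ℝ :=
  sInf ((fun x : EuclideanSpace ℝ (Fin d) => ‖Matrix.toEuclideanLin W x‖) '' {x | ‖x‖ = 1})

lemma toEuclideanLin_mul' {d : ℕ} (A B : Matrix (Fin d) (Fin d) ℝ) (x : EuclideanSpace ℝ (Fin d)) :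
    Matrix.toEuclideanLin (A*B) x = Matrix.toEuclideanLin A (Matrix.toEuclideanLin B x) := by
  simp [Matrix.toEuclideanLin_apply, Matrix.mulVec_mulVec]

lemma toEuclideanLin_one' {d : ℕ} (x : EuclideanSpace ℝ (Fin d)) :
    Matrix.toEuclideanLin (1 : Matrix (Fin d) (Fin d) ℝ) x = x := by
  simp [Matrix.toEuclideanLin_apply]

section main
variable {d : ℕ} (W : Matrix (Fin d) (Fin d) ℝ)

lemma sigma_facts (hW : IsUnit W) (u : EuclideanSpace ℝ (Fin d)) (hu : ‖u‖ = 1) :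
    0 < sigmaMin W ∧ sigmaMin W ≤ ‖Matrix.toEuclideanLin W u‖ ∧
      ∀ x : EuclideanSpace ℝ (Fin d), ‖Matrix.toEuclideanLin W x‖ ≤ sigmaMax W * ‖x‖ := by
  set L := Matrix.toEuclideanLin W with hL
  obtain ⟨V, hVW⟩ : ∃ V, V * W = 1 := ⟨hW.unit⁻¹.1, hW.unit.inv_mul⟩
  have hinv : ∀ x, Matrix.toEuclideanLin V (L x) = x := fun x => by
    rw [hL, ← toEuclideanLin_mul', hVW, toEuclideanLin_one']
  set M := LinearMap.toContinuousLinearMap L with hM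
  set M' := LinearMap.toContinuousLinearMap (Matrix.toEuclideanLin V) with hM'
  have hMle : ∀ x, ‖L x‖ ≤ ‖M‖ * ‖x‖ := fun x => M.le_opNorm x
  have hM'le : ∀ x, ‖Matrix.toEuclideanLin V x‖ ≤ ‖M'‖ * ‖x‖ := fun x => M'.le_opNorm x
  have hM'pos : 0 < ‖M'‖ := by
    rcases norm_nonneg (M' : _) |>.lt_or_eq with h | h
    · exact h
    · exfalso
      have := hM'le (L u)
      rw [← h] at this
      simp only [zero_mul] at this
      have h2 : ‖u‖ ≤ 0 := by rw [← hinv u]; exact this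
      rw [hu] at h2; linarith
  set S := ((fun x : EuclideanSpace ℝ (Fin d) => ‖L x‖) '' {x | ‖x‖ = 1}) with hS
  have hne : S.Nonempty := ⟨‖L u‖, u, hu, rfl⟩
  have hbdd : BddAbove S := by
    refine ⟨‖M‖, ?_⟩
    rintro y ⟨x, hx, rfl⟩
    have := hMle x
    rw [hx, mul_one] at this
    exact this
  have hbddb : BddBelow S := ⟨0, by rintro y ⟨x, hx, rfl⟩; exact norm_nonneg _⟩
  have hmin_le : sigmaMin W ≤ ‖L u‖ := csInf_le hbddb ⟨u, hu, rfl⟩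
  have hmin_pos : 0 < sigmaMin W := by
    have : (‖M'‖)⁻¹ ≤ sigmaMin W := by
      apply le_csInf hne
      rintro y ⟨x, hx, rfl⟩
      have h1 : (1:ℝ) ≤ ‖M'‖ * ‖L x‖ := by
        have := hM'le (L x); rw [hinv x, hx] at this; exact this
      rw [inv_le_iff_one_le_mul₀' hM'pos]
      exact h1
    exact lt_of_lt_of_le (inv_pos.mpr hM'pos) this
  have hmax : ∀ x, ‖L x‖ ≤ sigmaMax W * ‖x‖ := by
    intro x
    rcases eq_or_ne x 0 with rfl | hx
    · simp
    · have hxpos : (0:ℝ) < ‖x‖ := norm_pos_iff.mpr hx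
      have hux : ‖(‖x‖)⁻¹ • x‖ = 1 := by
        rw [norm_smul, Real.norm_eq_abs, abs_of_pos (by positivity), inv_mul_cancel₀ hxpos.ne']
      have h1 : ‖L ((‖x‖)⁻¹ • x)‖ ≤ sigmaMax W := le_csSup hbdd ⟨_, hux, rfl⟩
      have h2 : ‖L ((‖x‖)⁻¹ • x)‖ = (‖x‖)⁻¹ * ‖L x‖ := by
        rw [map_smul, norm_smul, Real.norm_eq_abs, abs_of_pos (by positivity)]
      rw [h2] at h1
      calc ‖L x‖ = ‖x‖ * ((‖x‖)⁻¹ * ‖L x‖) := by field_simp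
        _ ≤ ‖x‖ * sigmaMax W := by gcongr
        _ = sigmaMax W * ‖x‖ := mul_comm _ _
  exact ⟨hmin_pos, hmin_le, hmax⟩
end main

noncomputable def condNumber {d : ℕ} (W : Matrix (Fin d) (Fin d) ℝ) : ℝ :=
  sigmaMax W / sigmaMin W

noncomputable def unitNormalize {d : ℕ} (x : EuclideanSpace ℝ (Fin d)) :
    EuclideanSpace ℝ (Fin d) := (‖x‖)⁻¹ • x

lemma normalize_sub_le {E : Type*} [NormedAddCommGroup E] [NormedSpace ℝ E]
    (a b : E) (ha : a ≠ 0) (hb : b ≠ 0) :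
    ‖(‖a‖)⁻¹ • a - (‖b‖)⁻¹ • b‖ ≤ 2 / ‖a‖ * ‖a - b‖ := by
  have ha' : (0:ℝ) < ‖a‖ := norm_pos_iff.mpr ha
  have hb' : (0:ℝ) < ‖b‖ := norm_pos_iff.mpr hb
  have h1 : (‖a‖)⁻¹ • a - (‖b‖)⁻¹ • b
      = (‖a‖)⁻¹ • (a - b) + ((‖a‖)⁻¹ - (‖b‖)⁻¹) • b := by
    rw [smul_sub, sub_smul]; abel
  have habs : |‖b‖ - ‖a‖| ≤ ‖a - b‖ := by
    rw [norm_sub_rev]; exact abs_norm_sub_norm_le b a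
  have h2 : ‖((‖a‖)⁻¹ - (‖b‖)⁻¹) • b‖ ≤ (‖a‖)⁻¹ * ‖a - b‖ := by
    rw [norm_smul, Real.norm_eq_abs]
    have e1 : (‖a‖)⁻¹ - (‖b‖)⁻¹ = (‖b‖ - ‖a‖) / (‖a‖ * ‖b‖) := by
      field_simp
    rw [e1, abs_div, abs_of_pos (mul_pos ha' hb')]
    have e2 : |‖b‖ - ‖a‖| / (‖a‖ * ‖b‖) * ‖b‖ = (‖a‖)⁻¹ * |‖b‖ - ‖a‖| := by
      field_simp
    rw [e2]
    gcongr
  calc ‖(‖a‖)⁻¹ • a - (‖b‖)⁻¹ • b‖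
      ≤ ‖(‖a‖)⁻¹ • (a - b)‖ + ‖((‖a‖)⁻¹ - (‖b‖)⁻¹) • b‖ := by rw [h1]; exact norm_add_le _ _
    _ ≤ (‖a‖)⁻¹ * ‖a - b‖ + (‖a‖)⁻¹ * ‖a - b‖ := by
        refine add_le_add (le_of_eq ?_) h2
        rw [norm_smul, Real.norm_eq_abs, abs_of_pos (by positivity)]
    _ = 2 / ‖a‖ * ‖a - b‖ := by ring

theorem error_bound_via_directional_alignment {d : ℕ} (W : Matrix (Fin d) (Fin d) ℝ)
    (hW : IsUnit W) (Ct Cp : EuclideanSpace ℝ (Fin d)) (hCt : Ct ≠ 0) (hCp : Cp ≠ 0) :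
    ‖(‖Matrix.toEuclideanLin W (unitNormalize Ct)‖)⁻¹ •
          Matrix.toEuclideanLin W (unitNormalize Ct) -
        (‖Matrix.toEuclideanLin W (unitNormalize Cp)‖)⁻¹ •
          Matrix.toEuclideanLin W (unitNormalize Cp)‖ ≤
      2 * condNumber W *
        Real.sqrt (2 * (1 - (inner ℝ Ct Cp : ℝ) / (‖Ct‖ * ‖Cp‖))) := by
  have hCt' : (0:ℝ) < ‖Ct‖ := norm_pos_iff.mpr hCt
  have hCp' : (0:ℝ) < ‖Cp‖ := norm_pos_iff.mpr hCp
  set u := unitNormalize Ct with hu_def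
  set v := unitNormalize Cp with hv_def
  have hu : ‖u‖ = 1 := by
    rw [hu_def, unitNormalize, norm_smul, Real.norm_eq_abs, abs_of_pos (by positivity),
      inv_mul_cancel₀ hCt'.ne']
  have hv : ‖v‖ = 1 := by
    rw [hv_def, unitNormalize, norm_smul, Real.norm_eq_abs, abs_of_pos (by positivity),
      inv_mul_cancel₀ hCp'.ne']
  set L := Matrix.toEuclideanLin W with hL
  obtain ⟨hmin_pos, hmin_u, hmax⟩ := sigma_facts W hW u hu
  obtain ⟨_, hmin_v, _⟩ := sigma_facts W hW v hv
  have hLu_pos : (0:ℝ) < ‖L u‖ := lt_of_lt_of_le hmin_pos hmin_u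
  have hLv_pos : (0:ℝ) < ‖L v‖ := lt_of_lt_of_le hmin_pos hmin_v
  have hLu : L u ≠ 0 := by intro h; rw [h, norm_zero] at hLu_pos; linarith
  have hLv : L v ≠ 0 := by intro h; rw [h, norm_zero] at hLv_pos; linarith
  have hsmax_nonneg : (0:ℝ) ≤ sigmaMax W := by
    have := hmax u; rw [hu, mul_one] at this
    exact le_trans (norm_nonneg _) this
  -- inner product computation
  have hs : (inner ℝ u v : ℝ) = (inner ℝ Ct Cp : ℝ) / (‖Ct‖ * ‖Cp‖) := by
    rw [hu_def, hv_def, unitNormalize, unitNormalize, real_inner_smul_left,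
      real_inner_smul_right]
    field_simp
  have hnormuv : ‖u - v‖ = Real.sqrt (2 * (1 - (inner ℝ Ct Cp : ℝ) / (‖Ct‖ * ‖Cp‖))) := by
    have hsq : ‖u - v‖^2 = 2 * (1 - (inner ℝ Ct Cp : ℝ) / (‖Ct‖ * ‖Cp‖)) := by
      rw [← hs, norm_sub_sq_real, hu, hv]; ring
    rw [← Real.sqrt_sq (norm_nonneg (u - v)), hsq]
  calc ‖(‖L u‖)⁻¹ • L u - (‖L v‖)⁻¹ • L v‖
      ≤ 2 / ‖L u‖ * ‖L u - L v‖ := normalize_sub_le _ _ hLu hLv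
    _ = 2 / ‖L u‖ * ‖L (u - v)‖ := by rw [map_sub]
    _ ≤ 2 / ‖L u‖ * (sigmaMax W * ‖u - v‖) := by
        gcongr
        exact hmax _
    _ ≤ 2 / sigmaMin W * (sigmaMax W * ‖u - v‖) := by
        gcongr
    _ = 2 * condNumber W * ‖u - v‖ := by rw [condNumber]; field_simp
    _ = _ := by rw [hnormuv]
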